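/- arXiv:2311.10074 — 2 statements merged into one kernel-verified Lean document; each statement's English description precedes it below -/
import Mathlib

section
/- For every s ∈ ℝ, the operator Q(s) is self-adjoint and Q(s) − id_H is a compact operator. -/
variable {H : Type*} [NormedAddCommGroup H] [InnerProductSpace ℝ H] [CompleteSpace H]

/-- `Dco T s = ∑_{k=0}^∞ ((-1)^k s^{2k} / (2k)!) • T^k`. -/
noncomputable def Dco (T : H →L[ℝ] H) (s : ℝ) : H →L[ℝ] H :=
  ∑' k : ℕ, ((-1 : ℝ) ^ k * s ^ (2 * k) / (Nat.factorial (2 * k) : ℝ)) • T ^ k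

/-- `Dsi T s = ∑_{k=0}^∞ ((-1)^k s^{2k} / (2k+1)!) • T^k`. -/
noncomputable def Dsi (T : H →L[ℝ] H) (s : ℝ) : H →L[ℝ] H :=
  ∑' k : ℕ, ((-1 : ℝ) ^ k * s ^ (2 * k) / (Nat.factorial (2 * k + 1) : ℝ)) • T ^ k

/-- The focal-point operator `Q(s) = Dco(s) - s • (Dsi(s) ∘ S)`. -/
noncomputable def Qop (T S : H →L[ℝ] H) (s : ℝ) : H →L[ℝ] H :=
  Dco T s - s • (Dsi T s ∘L S)

/-- The scalar Jacobi solution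
`c_{λ,μ}(s) = ∑ (-1)^k s^{2k} λ^k/(2k)! - s·μ·∑ (-1)^k s^{2k} λ^k/(2k+1)!`. -/
noncomputable def cJacobi (lam mu : ℝ) (s : ℝ) : ℝ :=
  (∑' k : ℕ, (-1 : ℝ) ^ k * s ^ (2 * k) * lam ^ k / (Nat.factorial (2 * k) : ℝ)) -
    s * mu * ∑' k : ℕ, (-1 : ℝ) ^ k * s ^ (2 * k) * lam ^ k / (Nat.factorial (2 * k + 1) : ℝ)

/-!
`Dco(s)` and `Dsi(s)` are real power series in `T`, so they are self-adjoint and commute with `S`;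
a product of commuting self-adjoint operators is self-adjoint. For compactness write
`Q(s) - 1 = (Dco(s) - 1) - s • Dsi(s) S`: the second term is compact because `S` is, and
`Dco(s) - 1 = ∑_{k ≥ 1} c_k T^k` is a convergent sum of compact operators, hence compact since
compact operators form a closed subspace.
-/

open Nat Filter

section Summability

variable {A : Type*} [NormedRing A] [NormedAlgebra ℝ A] [CompleteSpace A]

theorem summable_smul_pow_of_abs_le_pow_div_factorial {c : ℕ → ℝ} {x : ℝ}
    (hc : ∀ k, |c k| ≤ x ^ k / k !) (a : A) : Summable fun k => c k • a ^ k := by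
  refine .of_norm_bounded_eventually_nat (Real.summable_pow_div_factorial (x * ‖a‖)) ?_
  filter_upwards [eventually_gt_atTop 0] with k hk
  calc ‖c k • a ^ k‖ ≤ |c k| * ‖a‖ ^ k := by
        rw [norm_smul, Real.norm_eq_abs]
        exact mul_le_mul_of_nonneg_left (norm_pow_le' a hk) (abs_nonneg _)
    _ ≤ x ^ k / k ! * ‖a‖ ^ k := by gcongr; exact hc k
    _ = (x * ‖a‖) ^ k / k ! := by ring

theorem abs_neg_one_pow_mul_pow_two_mul_div_factorial_le (s : ℝ) {k n : ℕ} (h : k ≤ n) :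
    |(-1 : ℝ) ^ k * s ^ (2 * k) / n !| ≤ (s ^ 2) ^ k / k ! := by
  rw [abs_div, abs_mul, abs_pow, abs_neg, abs_one, one_pow, one_mul, pow_mul,
    abs_of_nonneg (by positivity), Nat.abs_cast]
  gcongr

theorem summable_Dco_series (s : ℝ) (a : A) :
    Summable fun k => ((-1 : ℝ) ^ k * s ^ (2 * k) / (2 * k)!) • a ^ k :=
  summable_smul_pow_of_abs_le_pow_div_factorial
    (fun _ => abs_neg_one_pow_mul_pow_two_mul_div_factorial_le s (by omega)) a

end Summability

theorem IsSelfAdjoint.tsum_smul_pow {A : Type*} [Semiring A] [TopologicalSpace A] [T2Space A]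
    [StarRing A] [ContinuousStar A] [Module ℝ A] [StarModule ℝ A] {a : A}
    (ha : IsSelfAdjoint a) (c : ℕ → ℝ) : IsSelfAdjoint (∑' k, c k • a ^ k) := by
  rw [IsSelfAdjoint, tsum_star]
  exact tsum_congr fun k => ((IsSelfAdjoint.all (c k)).smul (ha.pow k)).star_eq

theorem IsCompactOperator.tsum_smul_pow_sub_smul_one {𝕜 E : Type*} [NontriviallyNormedField 𝕜]
    [NormedAddCommGroup E] [NormedSpace 𝕜 E] [CompleteSpace E] {T : E →L[𝕜] E}
    (hT : IsCompactOperator T) {c : ℕ → 𝕜} (hc : Summable fun k => c k • T ^ k) :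
    IsCompactOperator (∑' k, c k • T ^ k - c 0 • (1 : E →L[𝕜] E)) := by
  rw [hc.tsum_eq_zero_add, pow_zero, add_sub_cancel_left]
  refine tsum_mem (s := compactOperator (RingHom.id 𝕜) E E)
    isClosed_setOfPred_isCompactOperator fun k => ?_
  rw [pow_succ]
  exact (hT.clm_comp (T ^ k)).smul (c (k + 1))

/-- For every `s ∈ ℝ` the operator `Q(s)` is self-adjoint and
`Q(s) - id` is a compact operator. -/
theorem Qop_selfAdjoint_and_compact_perturbation_of_id
    (T S : H →L[ℝ] H)
    (hTc : IsCompactOperator T) (hSc : IsCompactOperator S)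
    (hTsa : IsSelfAdjoint T) (hSsa : IsSelfAdjoint S)
    (hcomm : T ∘L S = S ∘L T) :
    ∀ s : ℝ, IsSelfAdjoint (Qop T S s) ∧
      IsCompactOperator (Qop T S s - (1 : H →L[ℝ] H)) := by
  intro s
  have hDsi_comm : Commute (Dsi T s) S :=
    Commute.tsum_left S fun k => (Commute.pow_left hcomm k).smul_left _
  have hDsiS : IsSelfAdjoint (Dsi T s ∘L S) :=
    ((hTsa.tsum_smul_pow _).commute_iff hSsa).mp hDsi_comm
  refine ⟨(hTsa.tsum_smul_pow _).sub ((IsSelfAdjoint.all s).smul hDsiS), ?_⟩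
  have hDco : IsCompactOperator (Dco T s - (1 : H →L[ℝ] H)) := by
    simpa [Dco] using hTc.tsum_smul_pow_sub_smul_one (summable_Dco_series s T)
  have hQ : Qop T S s - (1 : H →L[ℝ] H) = (Dco T s - 1) - s • (Dsi T s ∘L S) := by
    rw [Qop]; abel
  rw [hQ]
  exact hDco.sub ((hSc.clm_comp (Dsi T s)).smul s)
end

section
/- For every s ∈ ℝ, the kernel ker Q(s) equals the linear span of the union of the joint eigenspaces ker(T − λ·id) ∩ ker(S − μ·id) taken over all pairs (λ, μ) ∈ ℝ × ℝ with c_{λ,μ}(s) = 0, where c_{λ,μ}(s) := ∑_{k=0}^∞ (−1)^k s^{2k} λ^k/(2k)! − s·μ·∑_{k=0}^∞ (−1)^k s^{2k} λ^k/(2k+1)!. -/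
/-!
`Dco(s) - 1` is a power series in the compact operator `T` without constant term and `Dsi(s) ∘ S`
is compact, so `Q(s)` is a compact perturbation of the identity and `W = ker Q(s)` is finite
dimensional. `T` and `S` commute with `Q(s)`, hence preserve `W`, where they restrict to commuting
symmetric operators; so `W` is spanned by joint eigenvectors. On a joint eigenvector with
eigenvalues `(λ, μ)` the operator `Q(s)` acts as the scalar `c_{λ,μ}(s)`, so such a vector lies in
`W` exactly when it is zero or `c_{λ,μ}(s) = 0`.
-/

variable {H : Type*} [NormedAddCommGroup H] [InnerProductSpace ℝ H] [CompleteSpace H]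

section PowerSeries

variable {A : Type*} [NormedRing A] [NormedAlgebra ℝ A] [CompleteSpace A]

theorem summable_smul_pow_of_abs_le {a : ℕ → ℝ} {c : ℝ} (ha : ∀ k, |a k| ≤ c ^ k / k.factorial)
    (x : A) : Summable fun k => a k • x ^ k := by
  refine .of_norm_bounded_eventually_nat (Real.summable_pow_div_factorial (c * ‖x‖)) ?_
  -- `‖x ^ 0‖ = ‖1‖` may exceed `1`, so the bound is only claimed for `k > 0`
  filter_upwards [Filter.eventually_gt_atTop 0] with k hk
  calc ‖a k • x ^ k‖ = |a k| * ‖x ^ k‖ := by rw [norm_smul, Real.norm_eq_abs]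
    _ ≤ c ^ k / k.factorial * ‖x‖ ^ k :=
      mul_le_mul (ha k) (norm_pow_le' x hk) (norm_nonneg _) ((abs_nonneg _).trans (ha k))
    _ = (c * ‖x‖) ^ k / k.factorial := by ring

theorem abs_neg_one_pow_mul_pow_div_factorial_le (s : ℝ) {k m : ℕ} (hkm : k ≤ m) :
    |(-1) ^ k * s ^ (2 * k) / m.factorial| ≤ (s ^ 2) ^ k / k.factorial := by
  rw [abs_div, abs_mul, abs_pow, abs_neg, abs_one, one_pow, one_mul, pow_mul,
    abs_of_nonneg (by positivity), Nat.abs_cast]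
  gcongr

theorem summable_alternating_smul_pow (s : ℝ) {m : ℕ → ℕ} (hm : ∀ k, k ≤ m k) (x : A) :
    Summable fun k => ((-1) ^ k * s ^ (2 * k) / (m k).factorial) • x ^ k :=
  summable_smul_pow_of_abs_le (fun k => abs_neg_one_pow_mul_pow_div_factorial_le s (hm k)) x

end PowerSeries

section Operators

variable {𝕜 E F : Type*} [NontriviallyNormedField 𝕜] [NormedAddCommGroup E] [NormedSpace 𝕜 E]
  [NormedAddCommGroup F] [NormedSpace 𝕜 F]

theorem isCompactOperator_tsum [CompleteSpace F] {f : ℕ → E →L[𝕜] F} (hf : Summable f)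
    (h : ∀ k, IsCompactOperator (f k)) : IsCompactOperator ((∑' k, f k : E →L[𝕜] F) : E → F) :=
  isCompactOperator_of_tendsto hf.hasSum.tendsto_sum_nat <| .of_forall fun _ =>
    (compactOperator (RingHom.id 𝕜) E F).sum_mem fun k _ => h k

theorem isCompactOperator_tsum_smul_pow_sub [CompleteSpace E] {T : E →L[𝕜] E}
    (hT : IsCompactOperator T) {a : ℕ → 𝕜} (ha : Summable fun k => a k • T ^ k) :
    IsCompactOperator (∑' k, a k • T ^ k - a 0 • (1 : E →L[𝕜] E)) := by
  rw [ha.tsum_eq_zero_add, pow_zero, add_sub_cancel_left]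
  refine isCompactOperator_tsum ((summable_nat_add_iff 1).mpr ha) fun k => ?_
  rw [pow_succ']
  exact (hT.comp_clm (T ^ k)).smul (a (k + 1))

theorem pow_apply_of_apply_eq_smul {T : E →L[𝕜] E} {x : E} {c : 𝕜} (h : T x = c • x) (k : ℕ) :
    (T ^ k) x = c ^ k • x := by
  induction k with
  | zero => simp
  | succ k ih => rw [pow_succ', mul_apply_eq_comp, ih, map_smul, h, smul_smul, pow_succ]

theorem tsum_smul_pow_apply_of_apply_eq_smul {T : E →L[𝕜] E} {x : E} {c : 𝕜} (h : T x = c • x)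
    {a : ℕ → 𝕜} (ha : Summable fun k => a k • T ^ k) (hc : Summable fun k => a k * c ^ k) :
    (∑' k, a k • T ^ k) x = (∑' k, a k * c ^ k) • x := by
  calc (∑' k, a k • T ^ k) x = ∑' k, (a k • T ^ k) x :=
        (ContinuousLinearMap.apply 𝕜 E x).map_tsum ha
    _ = ∑' k, (a k * c ^ k) • x := tsum_congr fun k => by
      rw [smul_apply, pow_apply_of_apply_eq_smul h, smul_smul]
    _ = (∑' k, a k * c ^ k) • x := hc.tsum_smul_const x

theorem finiteDimensional_ker_of_isCompactOperator_one_sub [CompleteSpace 𝕜] (Q : E →L[𝕜] E)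
    (hQ : IsCompactOperator ((1 - Q : E →L[𝕜] E) : E → E)) :
    FiniteDimensional 𝕜 (LinearMap.ker (Q : E →ₗ[𝕜] E)) := by
  set K : E →L[𝕜] E := 1 - Q
  have hfix : ∀ v ∈ LinearMap.ker (Q : E →ₗ[𝕜] E), K v = v := fun v hv => by
    have hQv : Q v = 0 := hv
    rw [sub_apply, one_apply_eq_self, hQv, sub_zero]
  have hmaps : ∀ v ∈ LinearMap.ker (Q : E →ₗ[𝕜] E), (K : E →ₗ[𝕜] E) v ∈
      LinearMap.ker (Q : E →ₗ[𝕜] E) := fun v hv => (hfix v hv).symm ▸ hv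
  have hid : ⇑((K : E →ₗ[𝕜] E).restrict hmaps) = id := funext fun v => Subtype.ext (hfix v v.2)
  exact .of_isCompactOperator_id (𝕜 := 𝕜) (hid ▸ hQ.restrict hmaps Q.isClosed_ker)

end Operators

section JointEigenspace

open Module.End

variable {𝕜 E : Type*} [RCLike 𝕜] [NormedAddCommGroup E] [InnerProductSpace 𝕜 E]

theorem le_iSup_iSup_inf_eigenspace_inf_eigenspace_of_commute {A B : E →ₗ[𝕜] E}
    (hA : A.IsSymmetric) (hB : B.IsSymmetric) (hAB : Commute A B) {W : Submodule 𝕜 E}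
    [FiniteDimensional 𝕜 W] (hAW : ∀ v ∈ W, A v ∈ W) (hBW : ∀ v ∈ W, B v ∈ W) :
    W ≤ ⨆ α, ⨆ β, W ⊓ (eigenspace A α ⊓ eigenspace B β) := by
  have htop := LinearMap.IsSymmetric.iSup_iSup_eigenspace_inf_eigenspace_eq_top_of_commute
    (hA.restrict_invariant hAW) (hB.restrict_invariant hBW) (LinearMap.restrict_commute hAB hAW hBW)
  calc W = (⊤ : Submodule 𝕜 W).map W.subtype := W.map_subtype_top.symm
    _ = ⨆ α, ⨆ β,
        (eigenspace (A.restrict hAW) α ⊓ eigenspace (B.restrict hBW) β).map W.subtype := by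
      simp_rw [← htop, Submodule.map_iSup]
    _ ≤ _ := iSup₂_mono fun α β => le_inf (W.map_subtype_le _) <| (Submodule.map_inf_le _).trans <|
      inf_le_inf (eigenspace_restrict_le_eigenspace A hAW α)
        (eigenspace_restrict_le_eigenspace B hBW β)

end JointEigenspace

theorem ker_sub_smul_one_eq_eigenspace {𝕜 E : Type*} [NontriviallyNormedField 𝕜]
    [NormedAddCommGroup E] [NormedSpace 𝕜 E] (T : E →L[𝕜] E) (a : 𝕜) :
    LinearMap.ker ((T - a • 1 : E →L[𝕜] E) : E →ₗ[𝕜] E) = Module.End.eigenspace (T : E →ₗ[𝕜] E) a :=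
  Module.End.eigenspace_def.symm

theorem apply_mem_ker_of_commute {R M : Type*} [CommRing R] [AddCommGroup M] [Module R M]
    {f g : Module.End R M} (h : Commute f g) {x : M} (hx : x ∈ LinearMap.ker g) :
    f x ∈ LinearMap.ker g := by
  rw [LinearMap.mem_ker, ← Module.End.mul_apply, ← h.eq, Module.End.mul_apply,
    LinearMap.mem_ker.1 hx, map_zero]

theorem tsum_alternating_smul_pow_apply {E : Type*} [NormedAddCommGroup E] [NormedSpace ℝ E]
    [CompleteSpace E] {T : E →L[ℝ] E} {x : E} {c : ℝ} (h : T x = c • x) (s : ℝ) {m : ℕ → ℕ}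
    (hm : ∀ k, k ≤ m k) :
    (∑' k, ((-1) ^ k * s ^ (2 * k) / (m k).factorial) • T ^ k) x =
      (∑' k, (-1) ^ k * s ^ (2 * k) * c ^ k / (m k).factorial) • x := by
  rw [tsum_smul_pow_apply_of_apply_eq_smul h (summable_alternating_smul_pow s hm T)
    (summable_alternating_smul_pow s hm c)]
  simp_rw [div_mul_eq_mul_div]

theorem Qop_apply_of_apply_eq_smul {T S : H →L[ℝ] H} {x : H} {lam mu : ℝ} (hT : T x = lam • x)
    (hS : S x = mu • x) (s : ℝ) : Qop T S s x = cJacobi lam mu s • x := by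
  rw [Qop, Dco, Dsi, sub_apply, smul_apply, ContinuousLinearMap.comp_apply, hS, map_smul,
    tsum_alternating_smul_pow_apply hT s (m := (2 * ·)) (fun k => by omega),
    tsum_alternating_smul_pow_apply hT s (m := (2 * · + 1)) (fun k => by omega),
    cJacobi, sub_smul, smul_smul, smul_smul]

omit [CompleteSpace H] in
theorem commute_Qop {R T S : H →L[ℝ] H} (hRT : Commute R T) (hRS : Commute R S) (s : ℝ) :
    Commute R (Qop T S s) :=
  (Commute.tsum_right R fun k => (hRT.pow_right k).smul_right _).sub_right <|
    ((Commute.tsum_right R fun k => (hRT.pow_right k).smul_right _).mul_right hRS).smul_right s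

theorem isCompactOperator_one_sub_Qop {T S : H →L[ℝ] H} (hT : IsCompactOperator T)
    (hS : IsCompactOperator S) (s : ℝ) :
    IsCompactOperator ((1 - Qop T S s : H →L[ℝ] H) : H → H) := by
  have hDco : IsCompactOperator ((Dco T s - 1 : H →L[ℝ] H) : H → H) := by
    simpa [Dco] using isCompactOperator_tsum_smul_pow_sub hT
      (summable_alternating_smul_pow s (m := (2 * ·)) (fun k => by omega) T)
  have hDsi : IsCompactOperator ((s • (Dsi T s ∘L S) : H →L[ℝ] H) : H → H) :=
    (hS.clm_comp (Dsi T s)).smul s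
  rw [show 1 - Qop T S s = s • (Dsi T s ∘L S) - (Dco T s - 1) by rw [Qop]; abel]
  exact hDsi.sub hDco

/-- For every `s ∈ ℝ`, `ker Q(s)` equals the span of the union of the
joint eigenspaces `ker (T - λ • id) ⊓ ker (S - μ • id)` over all pairs `(λ, μ)` with
`c_{λ,μ}(s) = 0`. -/
theorem Qop_ker_eq_span_joint_eigenspaces
    (T S : H →L[ℝ] H)
    (hTc : IsCompactOperator T) (hSc : IsCompactOperator S)
    (hTsa : IsSelfAdjoint T) (hSsa : IsSelfAdjoint S)
    (hcomm : T ∘L S = S ∘L T) :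
    ∀ s : ℝ, LinearMap.ker (Qop T S s : H →ₗ[ℝ] H) =
      Submodule.span ℝ (⋃ p : ℝ × ℝ, ⋃ (_ : cJacobi p.1 p.2 s = 0),
        ((LinearMap.ker ((T - p.1 • (1 : H →L[ℝ] H) : H →L[ℝ] H) : H →ₗ[ℝ] H) ⊓
          LinearMap.ker ((S - p.2 • (1 : H →L[ℝ] H) : H →L[ℝ] H) : H →ₗ[ℝ] H) : Submodule ℝ H) : Set H)) := by
  intro s
  set W := LinearMap.ker (Qop T S s : H →ₗ[ℝ] H)
  have hTS : Commute T S := hcomm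
  have hW_invariant {R : H →L[ℝ] H} (hRT : Commute R T) (hRS : Commute R S) :
      ∀ v ∈ W, R v ∈ W := fun _ =>
    apply_mem_ker_of_commute ((commute_Qop hRT hRS s).map ContinuousLinearMap.toLinearMapRingHom)
  have : FiniteDimensional ℝ W :=
    finiteDimensional_ker_of_isCompactOperator_one_sub _ (isCompactOperator_one_sub_Qop hTc hSc s)
  have hW_le := le_iSup_iSup_inf_eigenspace_inf_eigenspace_of_commute hTsa.isSymmetric
    hSsa.isSymmetric (hTS.map ContinuousLinearMap.toLinearMapRingHom)
    (hW_invariant (.refl T) hTS) (hW_invariant hTS.symm (.refl S))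
  simp only [ker_sub_smul_one_eq_eigenspace, Submodule.span_iUnion₂, Submodule.span_eq]
  refine le_antisymm (hW_le.trans (iSup₂_le fun lam mu => ?_)) (iSup₂_le fun p hc => ?_)
  · by_cases hc : cJacobi lam mu s = 0
    · exact inf_le_right.trans (le_iSup₂_of_le (lam, mu) hc le_rfl)
    · rintro v ⟨hvQ, hvT, hvS⟩
      have hQv := Qop_apply_of_apply_eq_smul (Module.End.mem_eigenspace_iff.1 hvT)
        (Module.End.mem_eigenspace_iff.1 hvS) s
      rw [show Qop T S s v = 0 from hvQ, eq_comm, smul_eq_zero] at hQv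
      exact hQv.resolve_left hc ▸ zero_mem _
  · rintro v ⟨hvT, hvS⟩
    show Qop T S s v = 0
    rw [Qop_apply_of_apply_eq_smul (Module.End.mem_eigenspace_iff.1 hvT)
      (Module.End.mem_eigenspace_iff.1 hvS) s, hc, zero_smul]
end
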